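/- Let f : ℝ → ℝ be smooth, V = {u ∈ ℝ³ : u₃ > 0}, F(u₁,u₂,u₃) = (u₁,u₂,u₃,f(u₂)) with unit normal ξ(u) = (−(u₃/β)f'(u₂), 0, 0, u₃/β). Then F is a totally geodesic hypersurface of the Siklos metric (h ≡ 0 on V) if and only if 2f''(u₂) = H'₄(u₂,u₃,f(u₂)) for all u₂ ∈ ℝ and all u₃ > 0. -/

import Mathlib

open scoped BigOperators

/-- Partial derivative of `f : ℝⁿ → ℝ` in the `i`-th coordinate direction. -/
noncomputable def pd {n : ℕ} (i : Fin n) (f : (Fin n → ℝ) → ℝ) (x : Fin n → ℝ) : ℝ :=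
  deriv (fun t => f (Function.update x i t)) (x i)

/-- Christoffel symbols `Γᵏᵢⱼ` of a metric field `g`. -/
noncomputable def christoffel {n : ℕ} (g : (Fin n → ℝ) → Matrix (Fin n) (Fin n) ℝ)
    (x : Fin n → ℝ) (k i j : Fin n) : ℝ :=
  (1 / 2) * ∑ l, (g x)⁻¹ k l *
    (pd i (fun y => g y l j) x + pd j (fun y => g y l i) x - pd l (fun y => g y i j) x)

/-- `curv g x i j k l` is the `l`-th component of `R(∂ᵢ,∂ⱼ)∂ₖ` at `x`
(convention `R(X,Y) = [∇_X,∇_Y] − ∇_{[X,Y]}`). -/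
noncomputable def curv {n : ℕ} (g : (Fin n → ℝ) → Matrix (Fin n) (Fin n) ℝ)
    (x : Fin n → ℝ) (i j k l : Fin n) : ℝ :=
  pd i (fun y => christoffel g y l j k) x - pd j (fun y => christoffel g y l i k) x
    + ∑ m, (christoffel g x l i m * christoffel g x m j k
        - christoffel g x l j m * christoffel g x m i k)

/-- The Siklos metric with parameter `β` and defining function `H = H(x₂,x₃,x₄)`;
indices `0,1,2,3` correspond to the coordinates `x₁,x₂,x₃,x₄`. -/
noncomputable def siklos (β : ℝ) (H : ℝ → ℝ → ℝ → ℝ) (x : Fin 4 → ℝ) :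
    Matrix (Fin 4) (Fin 4) ℝ :=
  Matrix.of fun i j =>
    if (i = 0 ∧ j = 1) ∨ (i = 1 ∧ j = 0) ∨ (i = 2 ∧ j = 2) ∨ (i = 3 ∧ j = 3) then
      β ^ 2 / x 2 ^ 2
    else if i = 1 ∧ j = 1 then β ^ 2 / x 2 ^ 2 * H (x 1) (x 2) (x 3)
    else 0

/-- `H'₂`. -/
noncomputable def H2 (H : ℝ → ℝ → ℝ → ℝ) (a b c : ℝ) : ℝ := deriv (fun t => H t b c) a
/-- `H'₃`. -/
noncomputable def H3 (H : ℝ → ℝ → ℝ → ℝ) (a b c : ℝ) : ℝ := deriv (fun t => H a t c) b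
/-- `H'₄`. -/
noncomputable def H4 (H : ℝ → ℝ → ℝ → ℝ) (a b c : ℝ) : ℝ := deriv (fun t => H a b t) c
/-- `H''₂₃`. -/
noncomputable def H23 (H : ℝ → ℝ → ℝ → ℝ) (a b c : ℝ) : ℝ := deriv (fun t => H3 H t b c) a
/-- `H''₃₃`. -/
noncomputable def H33 (H : ℝ → ℝ → ℝ → ℝ) (a b c : ℝ) : ℝ := deriv (fun t => H3 H a t c) b
/-- `H''₃₄`. -/
noncomputable def H34 (H : ℝ → ℝ → ℝ → ℝ) (a b c : ℝ) : ℝ := deriv (fun t => H4 H a t c) b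
/-- `H''₄₄`. -/
noncomputable def H44 (H : ℝ → ℝ → ℝ → ℝ) (a b c : ℝ) : ℝ := deriv (fun t => H4 H a b t) c

/-- Ricci tensor `Ricⱼₖ = Σᵢ (R(∂ᵢ,∂ⱼ)∂ₖ)ⁱ` of the Siklos metric. -/
noncomputable def ricci (β : ℝ) (H : ℝ → ℝ → ℝ → ℝ) (x : Fin 4 → ℝ) (j k : Fin 4) : ℝ :=
  ∑ i, curv (siklos β H) x i j k i

/-- Scalar curvature of the Siklos metric. -/
noncomputable def scal (β : ℝ) (H : ℝ → ℝ → ℝ → ℝ) (x : Fin 4 → ℝ) : ℝ :=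
  ∑ j, ∑ k, (siklos β H x)⁻¹ j k * ricci β H x j k

/-- `g(X,Y) = Σᵢⱼ gᵢⱼ Xⁱ Yʲ`. -/
noncomputable def gApply (M : Matrix (Fin 4) (Fin 4) ℝ) (X Y : Fin 4 → ℝ) : ℝ :=
  ∑ i, ∑ j, M i j * X i * Y j

/-- Curvature applied to arbitrary vectors: `R(X,Y)Z = Σᵢⱼₖ XⁱYʲZᵏ R(∂ᵢ,∂ⱼ)∂ₖ`. -/
noncomputable def Rmulti (β : ℝ) (H : ℝ → ℝ → ℝ → ℝ) (x : Fin 4 → ℝ)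
    (X Y Z : Fin 4 → ℝ) (l : Fin 4) : ℝ :=
  ∑ i, ∑ j, ∑ k, X i * Y j * Z k * curv (siklos β H) x i j k l

/-- `Rₐᵦ𝒸𝒹 = g(R(∂ₐ,∂ᵦ)∂𝒹, ∂𝒸)`. -/
noncomputable def Rlow (β : ℝ) (H : ℝ → ℝ → ℝ → ℝ) (x : Fin 4 → ℝ) (a b c d : Fin 4) : ℝ :=
  ∑ l, siklos β H x l c * curv (siklos β H) x a b d l

/-- The Weyl tensor (in dimension 4) of the Siklos metric. -/
noncomputable def weyl (β : ℝ) (H : ℝ → ℝ → ℝ → ℝ) (x : Fin 4 → ℝ) (a b c d : Fin 4) : ℝ :=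
  Rlow β H x a b c d
    - (1 / 2) * (siklos β H x a c * ricci β H x b d - siklos β H x a d * ricci β H x b c
        + siklos β H x b d * ricci β H x a c - siklos β H x b c * ricci β H x a d)
    + scal β H x / 6 *
        (siklos β H x a c * siklos β H x b d - siklos β H x a d * siklos β H x b c)

/-- Coordinate tangent vector `F_{uᵢ}` of an immersion `F : ℝ³ → ℝ⁴`. -/
noncomputable def Fu (F : (Fin 3 → ℝ) → Fin 4 → ℝ) (i : Fin 3) (u : Fin 3 → ℝ) :
    Fin 4 → ℝ := fun k => pd i (fun v => F v k) u

/-- Ambient covariant derivative `DᵢF_{uⱼ}` along `F`, for the Siklos metric. -/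
noncomputable def ambD (β : ℝ) (H : ℝ → ℝ → ℝ → ℝ) (F : (Fin 3 → ℝ) → Fin 4 → ℝ)
    (i j : Fin 3) (u : Fin 3 → ℝ) : Fin 4 → ℝ :=
  fun k => pd i (fun v => Fu F j v k) u
    + ∑ l, ∑ m, christoffel (siklos β H) (F u) k l m * Fu F i u l * Fu F j u m

/-- Second fundamental form `hᵢⱼ = g(DᵢF_{uⱼ}, ξ)` of `F` with unit normal `ξ`. -/
noncomputable def sff (β : ℝ) (H : ℝ → ℝ → ℝ → ℝ) (F ξ : (Fin 3 → ℝ) → Fin 4 → ℝ)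
    (i j : Fin 3) (u : Fin 3 → ℝ) : ℝ :=
  gApply (siklos β H (F u)) (ambD β H F i j u) (ξ u)

/-- Induced metric `ĝᵢⱼ = g(F_{uᵢ}, F_{uⱼ})` of the hypersurface. -/
noncomputable def inducedMetric (β : ℝ) (H : ℝ → ℝ → ℝ → ℝ) (F : (Fin 3 → ℝ) → Fin 4 → ℝ)
    (u : Fin 3 → ℝ) : Matrix (Fin 3) (Fin 3) ℝ :=
  Matrix.of fun i j => gApply (siklos β H (F u)) (Fu F i u) (Fu F j u)

/-- Covariant derivative of the second fundamental form,
`(∇h)ₖᵢⱼ = ∂ₖhᵢⱼ − Σₗ Γ̂ˡₖᵢ hₗⱼ − Σₗ Γ̂ˡₖⱼ hᵢₗ`. -/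
noncomputable def nablah (β : ℝ) (H : ℝ → ℝ → ℝ → ℝ) (F ξ : (Fin 3 → ℝ) → Fin 4 → ℝ)
    (k i j : Fin 3) (u : Fin 3 → ℝ) : ℝ :=
  pd k (fun v => sff β H F ξ i j v) u
    - ∑ l, christoffel (inducedMetric β H F) u l k i * sff β H F ξ l j u
    - ∑ l, christoffel (inducedMetric β H F) u l k j * sff β H F ξ i l u

/-- Mean curvature `(1/3) Σᵢⱼ ĝⁱʲ hᵢⱼ` of the hypersurface. -/
noncomputable def meanCurv (β : ℝ) (H : ℝ → ℝ → ℝ → ℝ) (F ξ : (Fin 3 → ℝ) → Fin 4 → ℝ)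
    (u : Fin 3 → ℝ) : ℝ :=
  (1 / 3) * ∑ i, ∑ j, (inducedMetric β H F u)⁻¹ i j * sff β H F ξ i j u


noncomputable def siklosInv (β : ℝ) (H : ℝ → ℝ → ℝ → ℝ) (x : Fin 4 → ℝ) :
    Matrix (Fin 4) (Fin 4) ℝ :=
  Matrix.of fun i j =>
    if i = 0 ∧ j = 0 then -(x 2 ^ 2 / β ^ 2 * H (x 1) (x 2) (x 3))
    else if (i = 0 ∧ j = 1) ∨ (i = 1 ∧ j = 0) ∨ (i = 2 ∧ j = 2) ∨ (i = 3 ∧ j = 3) then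
      x 2 ^ 2 / β ^ 2
    else 0

lemma siklos_inv (β : ℝ) (hβ : β ≠ 0) (H : ℝ → ℝ → ℝ → ℝ) (x : Fin 4 → ℝ) (hx : x 2 ≠ 0) :
    (siklos β H x)⁻¹ = siklosInv β H x := by
  apply Matrix.inv_eq_right_inv
  ext i j
  fin_cases i <;> fin_cases j <;>
    simp [Matrix.mul_apply, Fin.sum_univ_four, siklos, siklosInv, Matrix.one_apply] <;>
    field_simp <;> ring

lemma hasDerivA (β b : ℝ) (hb : b ≠ 0) :
    HasDerivAt (fun t : ℝ => β ^ 2 / t ^ 2) (-2 * β ^ 2 / b ^ 3) b := by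
  have h2 := ((hasDerivAt_pow 2 b).inv (pow_ne_zero 2 hb)).const_mul (β ^ 2)
  have e1 : (fun t : ℝ => β ^ 2 / t ^ 2) = fun y : ℝ => β ^ 2 * (y ^ 2)⁻¹ := by
    funext t; rw [div_eq_mul_inv]
  rw [e1]
  simp only [Pi.inv_apply] at h2
  refine h2.congr_deriv ?_
  field_simp; ring

lemma derivA (β b : ℝ) (hb : b ≠ 0) :
    deriv (fun t : ℝ => β ^ 2 / t ^ 2) b = -2 * β ^ 2 / b ^ 3 := (hasDerivA β b hb).deriv

lemma chr1 (β : ℝ) (hβ : β ≠ 0) (H : ℝ → ℝ → ℝ → ℝ) (x : Fin 4 → ℝ) (hx : x 2 ≠ 0)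
    (i j : Fin 4) :
    christoffel (siklos β H) x 1 i j =
      if (i = 1 ∧ j = 2) ∨ (i = 2 ∧ j = 1) then -1 / x 2 else 0 := by
  rw [christoffel, siklos_inv β hβ H x hx]
  fin_cases i <;> fin_cases j <;>
    (simp (config := { decide := true }) [Fin.sum_univ_four, siklosInv, pd, siklos,
      Function.update_apply, derivA β (x 2) hx, deriv_const_mul_field] <;>
     field_simp <;> ring)

lemma chr3 (β : ℝ) (hβ : β ≠ 0) (H : ℝ → ℝ → ℝ → ℝ) (x : Fin 4 → ℝ) (hx : x 2 ≠ 0)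
    (i j : Fin 4) :
    christoffel (siklos β H) x 3 i j =
      if i = 1 ∧ j = 1 then -(H4 H (x 1) (x 2) (x 3)) / 2
      else if (i = 2 ∧ j = 3) ∨ (i = 3 ∧ j = 2) then -1 / x 2 else 0 := by
  rw [christoffel, siklos_inv β hβ H x hx]
  fin_cases i <;> fin_cases j <;>
    (simp (config := { decide := true }) [Fin.sum_univ_four, siklosInv, pd, siklos,
      Function.update_apply, derivA β (x 2) hx, deriv_const_mul_field, H4] <;>
     field_simp <;> ring)

lemma Fu0 (f : ℝ → ℝ) (u : Fin 3 → ℝ) :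
    Fu (fun u => ![u 0, u 1, u 2, f (u 1)]) 0 u = ![1, 0, 0, 0] := by
  funext k
  fin_cases k <;>
    simp (config := { decide := true }) [Fu, pd, Function.update_apply]

lemma Fu1 (f : ℝ → ℝ) (u : Fin 3 → ℝ) :
    Fu (fun u => ![u 0, u 1, u 2, f (u 1)]) 1 u = ![0, 1, 0, deriv f (u 1)] := by
  funext k
  fin_cases k <;>
    simp (config := { decide := true }) [Fu, pd, Function.update_apply]

lemma Fu2 (f : ℝ → ℝ) (u : Fin 3 → ℝ) :
    Fu (fun u => ![u 0, u 1, u 2, f (u 1)]) 2 u = ![0, 0, 1, 0] := by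
  funext k
  fin_cases k <;>
    simp (config := { decide := true }) [Fu, pd, Function.update_apply]

lemma sff_eq (β : ℝ) (hβ : β ≠ 0) (H : ℝ → ℝ → ℝ → ℝ) (f : ℝ → ℝ)
    (u : Fin 3 → ℝ) (hu : u 2 ≠ 0) (i j : Fin 3) :
    sff β H (fun u => ![u 0, u 1, u 2, f (u 1)])
      (fun u => ![-(u 2 / β) * deriv f (u 1), 0, 0, u 2 / β]) i j u
    = if i = 1 ∧ j = 1 then
        (β / u 2) * (deriv (deriv f) (u 1) - H4 H (u 1) (u 2) (f (u 1)) / 2)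
      else 0 := by
  have hx : (![u 0, u 1, u 2, f (u 1)] : Fin 4 → ℝ) 2 ≠ 0 := by simpa using hu
  rw [sff, gApply]
  fin_cases i <;> fin_cases j <;>
    (simp (config := { decide := true }) [Fin.sum_univ_four, siklos, ambD,
       chr1 β hβ H _ hx, chr3 β hβ H _ hx, Fu0, Fu1, Fu2, pd, Function.update_apply] <;>
     field_simp <;> ring)

/-- `F(u₁,u₂,u₃) = (u₁,u₂,u₃,f(u₂))` is totally geodesic iff
`2f''(u₂) = H'₄(u₂,u₃,f(u₂))` for all `u₂` and all `u₃ > 0`. -/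
theorem stmt_11 (β : ℝ) (hβ : 0 < β) (H : ℝ → ℝ → ℝ → ℝ)
    (hH : ContDiff ℝ (⊤ : ℕ∞) fun p : ℝ × ℝ × ℝ => H p.1 p.2.1 p.2.2)
    (f : ℝ → ℝ) (hf : ContDiff ℝ (⊤ : ℕ∞) f)
    (F ξ : (Fin 3 → ℝ) → Fin 4 → ℝ)
    (hF : F = fun u => ![u 0, u 1, u 2, f (u 1)])
    (hξ : ξ = fun u => ![-(u 2 / β) * deriv f (u 1), 0, 0, u 2 / β]) :
    (∀ u : Fin 3 → ℝ, 0 < u 2 → ∀ i j : Fin 3, sff β H F ξ i j u = 0) ↔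
    (∀ a b : ℝ, 0 < b → 2 * deriv (deriv f) a = H4 H a b (f a)) := by
  subst hF hξ
  constructor
  · intro h a b hb
    have hb2 : (![0, a, b] : Fin 3 → ℝ) 2 ≠ 0 := by simpa using hb.ne'
    have h1 := h ![0, a, b] (by simpa using hb) 1 1
    rw [sff_eq β hβ.ne' H f _ hb2] at h1
    rw [if_pos ⟨rfl, rfl⟩] at h1
    simp only [Matrix.cons_val_one, Matrix.head_cons, Matrix.cons_val_two, Matrix.tail_cons, Matrix.cons_val_zero] at h1
    have hβb : β / b ≠ 0 := div_ne_zero hβ.ne' hb.ne'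
    have h2 := (mul_eq_zero.mp h1).resolve_left hβb
    linarith
  · intro h u hu i j
    rw [sff_eq β hβ.ne' H f u hu.ne']
    split_ifs with hc
    · have h2 := h (u 1) (u 2) hu
      have h3 : deriv (deriv f) (u 1) - H4 H (u 1) (u 2) (f (u 1)) / 2 = 0 := by linarith
      rw [h3, mul_zero]
    · rfl
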